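/- Let θ be a real-valued arithmetic function with θ(1) ≥ 2 and θ(n) ≥ n, and let χ be the characteristic function of B_θ. Then for Re(s) > 1, 0 = ∑_{n≥1} χ(n) n^{-s} ( ∑_{p ≤ θ(n)} (log p)/(p^s − 1) − log n ) ∏_{p ≤ θ(n)} (1 − p^{-s}). -/

import Mathlib

/-!
Every `N ≥ 1` factors uniquely as `N = n M` with `n ∈ B_θ` and `M` free of primes `≤ θ(n)`: `n` is
found greedily, by cutting `N` at the first prime `P` with `θ(N_{<P}) < P`, where `N_{<P}` is the
part of `N` supported below `P`. Regrouping `ζ(s) = ∑ N^{-s}` along this factorization, with the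
sum over `M` evaluated by the Euler product as `ζ(s) ∏_{p ≤ θ(n)} (1 - p^{-s})`, gives
`1 = ∑_{n ∈ B_θ} n^{-s} ∏_{p ≤ θ(n)} (1 - p^{-s})` for `Re s > 1`. On `Re s > σ > 1` the terms are
bounded by `n^{-σ} exp (∑ m^{-σ})`, so the series may be differentiated termwise, and the
derivative of the constant `1` is the stated sum.
-/

open scoped Classical

/-- Membership in the set `B_θ`. -/
def InB (θ : ℕ → ℝ) (n : ℕ) : Prop :=
  0 < n ∧ ∀ p ∈ n.primeFactors,
    (p : ℝ) ≤ θ (∏ q ∈ n.primeFactors.filter (· < p), q ^ n.factorization q)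

/-- The finite set of primes `p ≤ x`. -/
noncomputable def primesLe (x : ℝ) : Finset ℕ :=
  (Finset.range (⌊x⌋₊ + 1)).filter fun p => p.Prime ∧ (p : ℝ) ≤ x

open Finset

section FactorPart

variable (N : ℕ) (P : ℕ → Prop) [DecidablePred P]

/-- The largest divisor of `N` all of whose prime factors satisfy `P`. -/
def factorPart : ℕ := (N.factorization.filter P).prod (· ^ ·)

lemma factorization_factorPart : (factorPart N P).factorization = N.factorization.filter P :=
  Nat.prod_pow_factorization_eq_self fun p hp => by
    rw [Finsupp.support_filter, Nat.support_factorization] at hp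
    exact Nat.prime_of_mem_primeFactors (mem_filter.1 hp).1

lemma primeFactors_factorPart : (factorPart N P).primeFactors = N.primeFactors.filter P := by
  rw [← Nat.support_factorization, factorization_factorPart, Finsupp.support_filter,
    Nat.support_factorization]

lemma factorPart_eq_prod :
    factorPart N P = ∏ q ∈ N.primeFactors.filter P, q ^ N.factorization q := by
  rw [factorPart, Finsupp.prod, Finsupp.support_filter, Nat.support_factorization]
  exact prod_congr rfl fun q hq => by rw [Finsupp.filter_apply_pos _ _ (mem_filter.1 hq).2]

lemma factorPart_ne_zero : factorPart N P ≠ 0 := by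
  rw [factorPart_eq_prod]
  exact prod_ne_zero_iff.2 fun p hp =>
    pow_ne_zero _ (Nat.prime_of_mem_primeFactors (mem_filter.1 hp).1).ne_zero

variable {N P}

lemma factorPart_eq_self (hN : N ≠ 0) (h : ∀ p ∈ N.primeFactors, P p) : factorPart N P = N := by
  rw [factorPart, (Finsupp.filter_eq_self_iff _ _).2 fun p hp =>
    h p (Nat.support_factorization N ▸ Finsupp.mem_support_iff.2 hp)]
  exact Nat.prod_factorization_pow_eq_self hN

end FactorPart

def roughNumbers (S : Finset ℕ) : Set ℕ := {M | M ≠ 0 ∧ ∀ p ∈ S, M.factorization p = 0}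

lemma factorization_mul_of_mem_roughNumbers {n M : ℕ} {S : Finset ℕ} (hn : n ≠ 0)
    (hM : M ∈ roughNumbers S) {p : ℕ} (hp : p ∈ S) :
    (n * M).factorization p = n.factorization p := by
  rw [Nat.factorization_mul hn hM.1, Finsupp.add_apply, hM.2 p hp, add_zero]

section Decomposition

variable {I : Set ℕ} {S : ℕ → Finset ℕ}

lemma injective_mul_roughNumbers (hI : ∀ n ∈ I, n ≠ 0)
    (hunique : ∀ N ≠ 0, ∃! n, n ∈ I ∧ ∀ p ∈ S n, N.factorization p = n.factorization p) :
    Function.Injective fun x : Σ n : I, roughNumbers (S n) => (x.1 : ℕ) * x.2 := by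
  rintro ⟨⟨n, hn⟩, ⟨M, hM⟩⟩ ⟨⟨n', hn'⟩, ⟨M', hM'⟩⟩ (h : n * M = n' * M')
  have hn0 := hI n hn
  obtain rfl : n = n' := (hunique _ (mul_ne_zero hn0 hM.1)).unique
    ⟨hn, fun p hp => factorization_mul_of_mem_roughNumbers hn0 hM hp⟩
    ⟨hn', fun p hp => h ▸ factorization_mul_of_mem_roughNumbers (hI n' hn') hM' hp⟩
  obtain rfl : M = M' := Nat.eq_of_mul_eq_mul_left (Nat.pos_of_ne_zero hn0) h
  rfl

lemma mem_range_mul_roughNumbers (hI : ∀ n ∈ I, n ≠ 0 ∧ n.primeFactors ⊆ S n)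
    (hexists : ∀ N ≠ 0, ∃ n, n ∈ I ∧ ∀ p ∈ S n, N.factorization p = n.factorization p)
    {N : ℕ} (hN : N ≠ 0) :
    N ∈ Set.range fun x : Σ n : I, roughNumbers (S n) => (x.1 : ℕ) * x.2 := by
  obtain ⟨n, hnI, hagree⟩ := hexists N hN
  obtain ⟨hn0, hsupp⟩ := hI n hnI
  have hdvd : n ∣ N := (Nat.factorization_le_iff_dvd hn0 hN).1 fun p => by
    by_cases hp : p ∈ S n
    · exact (hagree p hp).ge
    · have : n.factorization p = 0 := Finsupp.notMem_support_iff.1 fun h =>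
        hp (hsupp (Nat.support_factorization n ▸ h))
      simp [this]
  refine ⟨⟨⟨n, hnI⟩, ⟨N / n, Nat.div_ne_zero_iff_of_dvd hdvd |>.2 ⟨hN, hn0⟩, fun p hp => ?_⟩⟩,
    Nat.mul_div_cancel' hdvd⟩
  rw [Nat.factorization_div hdvd, Finsupp.tsub_apply, hagree p hp, Nat.sub_self]

/-- `(n, M) ↦ n * M` is a bijection from `Σ n : I, roughNumbers (S n)` onto the positive
integers. -/
theorem hasSum_mul_tsum_roughNumbers {R : Type*} [NormedRing R] [CompleteSpace R]
    (f : ℕ →*₀ R) (hf : Summable f) (hI : ∀ n ∈ I, n ≠ 0 ∧ n.primeFactors ⊆ S n)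
    (hunique : ∀ N ≠ 0, ∃! n, n ∈ I ∧ ∀ p ∈ S n, N.factorization p = n.factorization p) :
    HasSum (fun n : I => f n * ∑' M : roughNumbers (S n), f M) (∑' N, f N) := by
  have hsigma : HasSum (fun x : Σ n : I, roughNumbers (S n) => f (x.1 * x.2)) (∑' N, f N) := by
    refine ((injective_mul_roughNumbers (fun n hn => (hI n hn).1) hunique).hasSum_iff
      fun N hN => ?_).2 hf.hasSum
    obtain rfl : N = 0 := by_contra fun h0 =>
      hN (mem_range_mul_roughNumbers hI (fun N hN => (hunique N hN).exists) h0)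
    exact map_zero f
  refine hsigma.sigma fun n => ?_
  simp only [map_mul]
  exact (hf.subtype _).hasSum.mul_left _

end Decomposition

lemma existsUnique_mem_factoredNumbers_factorization_eq (S : Finset ℕ) (N : ℕ) :
    ∃! n, n ∈ Nat.factoredNumbers S ∧ ∀ p ∈ S, N.factorization p = n.factorization p := by
  refine ⟨factorPart N (· ∈ S), ⟨?_, fun p hp => ?_⟩, fun n ⟨hn, hagree⟩ => ?_⟩
  · exact Nat.mem_factoredNumbers_of_primeFactors_subset (factorPart_ne_zero _ _)
      fun p hp => by rw [primeFactors_factorPart] at hp; exact (mem_filter.1 hp).2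
  · rw [factorization_factorPart, Finsupp.filter_apply_pos _ _ hp]
  · refine Nat.eq_of_factorization_eq (Nat.ne_zero_of_mem_factoredNumbers hn)
      (factorPart_ne_zero _ _) fun p => ?_
    rw [factorization_factorPart, Finsupp.filter_apply]
    split_ifs with hp
    · exact (hagree p hp).symm
    · exact Finsupp.notMem_support_iff.1 fun h => hp
        (Nat.primeFactors_subset_of_mem_factoredNumbers hn (Nat.support_factorization n ▸ h))

theorem tsum_roughNumbers {F : Type*} [NormedField F] [CompleteSpace F] (f : ℕ →*₀ F)
    (hf : Summable f) {S : Finset ℕ} (hS : ∀ p ∈ S, p.Prime) :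
    ∑' M : roughNumbers S, f M = (∑' N, f N) * ∏ p ∈ S, (1 - f p) := by
  have hsum := hasSum_mul_tsum_roughNumbers f hf (fun n hn =>
    ⟨Nat.ne_zero_of_mem_factoredNumbers hn, Nat.primeFactors_subset_of_mem_factoredNumbers hn⟩)
    fun N _ => existsUnique_mem_factoredNumbers_factorization_eq S N
  have hf' : Summable f.toMonoidHom := hf
  have hnorm {p : ℕ} (hp : p.Prime) : ‖f p‖ < 1 := hf'.norm_lt_one hp.one_lt
  have heuler : HasSum (fun n : Nat.factoredNumbers S => f n) (∏ p ∈ S, (1 - f p)⁻¹) := by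
    have := (EulerProduct.summable_and_hasSum_factoredNumbers_prod_filter_prime_geometric
      (f := f.toMonoidHom) hnorm S).2
    rwa [filter_true_of_mem hS] at this
  rw [← (heuler.mul_right _).unique hsum, mul_right_comm, ← prod_mul_distrib,
    prod_eq_one fun p hp => inv_mul_cancel₀ <| sub_ne_zero.2 fun h =>
      (hnorm (hS p hp)).ne (by rw [← h, norm_one]), one_mul]

lemma mem_primesLe {x : ℝ} {p : ℕ} : p ∈ primesLe x ↔ p.Prime ∧ (p : ℝ) ≤ x := by
  refine mem_filter.trans ⟨And.right, fun h => ⟨mem_range.2 ?_, h⟩⟩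
  exact Nat.lt_succ_of_le (Nat.le_floor h.2)

section BTheta

variable {θ : ℕ → ℝ}

lemma inB_iff {n : ℕ} :
    InB θ n ↔ 0 < n ∧ ∀ p ∈ n.primeFactors, (p : ℝ) ≤ θ (factorPart n (· < p)) := by
  simp only [InB, factorPart_eq_prod]

lemma primeFactors_subset_primesLe (hθ : ∀ n : ℕ, 1 ≤ n → (n : ℝ) ≤ θ n) {n : ℕ}
    (hn : InB θ n) : n.primeFactors ⊆ primesLe (θ n) := fun _ hp =>
  mem_primesLe.2 ⟨Nat.prime_of_mem_primeFactors hp,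
    (Nat.cast_le.2 (Nat.le_of_mem_primeFactors hp)).trans (hθ n hn.1)⟩

/-- The greedy construction: cut `N` at the first prime `P` exceeding `θ` of the part of `N`
below `P`. -/
lemma exists_inB_factorization_eq {N : ℕ} (hN : N ≠ 0) :
    ∃ n, InB θ n ∧ ∀ p ∈ primesLe (θ n), N.factorization p = n.factorization p := by
  have hex : ∃ P, P.Prime ∧ θ (factorPart N (· < P)) < P := by
    obtain ⟨P, hle, hP⟩ := Nat.exists_infinite_primes (max (N + 1) (⌊θ N⌋₊ + 1))
    refine ⟨P, hP, ?_⟩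
    rw [factorPart_eq_self hN fun _ hp => (Nat.le_of_mem_primeFactors hp).trans_lt (by omega)]
    exact (Nat.lt_floor_add_one _).trans_le (by exact_mod_cast (le_max_right _ _).trans hle)
  obtain ⟨-, hθP⟩ := Nat.find_spec hex
  refine ⟨factorPart N (· < Nat.find hex), inB_iff.2 ⟨Nat.pos_of_ne_zero (factorPart_ne_zero _ _),
    fun q hq => ?_⟩, fun p hp => ?_⟩
  · rw [primeFactors_factorPart, mem_filter] at hq
    have hcut : factorPart (factorPart N (· < Nat.find hex)) (· < q) = factorPart N (· < q) := by
      refine Nat.eq_of_factorization_eq (factorPart_ne_zero _ _) (factorPart_ne_zero _ _)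
        fun p => ?_
      simp only [factorization_factorPart, Finsupp.filter_apply]
      split_ifs <;> omega
    rw [hcut]
    exact not_lt.1 fun h => Nat.find_min hex hq.2 ⟨Nat.prime_of_mem_primeFactors hq.1, h⟩
  · have hp : p < Nat.find hex := by exact_mod_cast (mem_primesLe.1 hp).2.trans_lt hθP
    rw [factorization_factorPart, Finsupp.filter_apply_pos (· < Nat.find hex) _ hp]

/-- If `n, n' ∈ B_θ` agree below `p > θ n`, then `p` divides neither: `n < p`, and `p ∣ n'` would
force `p ≤ θ` of the part of `n'` below `p`, which is `n`. -/
lemma factorization_eq_of_theta_lt (hθ : ∀ n : ℕ, 1 ≤ n → (n : ℝ) ≤ θ n) {n n' p : ℕ}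
    (hn : InB θ n) (hn' : InB θ n') (hbelow : ∀ q < p, n.factorization q = n'.factorization q)
    (hp : θ n < p) : n.factorization p = n'.factorization p := by
  have hnp : n < p := by exact_mod_cast (hθ n hn.1).trans_lt hp
  rw [Nat.factorization_eq_zero_of_lt hnp, eq_comm]
  by_contra hne
  have hpn' : p ∈ n'.primeFactors := Nat.support_factorization n' ▸ Finsupp.mem_support_iff.2 hne
  have hcut : factorPart n' (· < p) = n := by
    refine Nat.eq_of_factorization_eq (factorPart_ne_zero _ _) hn.1.ne' fun q => ?_
    rw [factorization_factorPart, Finsupp.filter_apply]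
    split_ifs with hq
    · exact (hbelow q hq).symm
    · exact (Nat.factorization_eq_zero_of_lt (by omega)).symm
  have := (inB_iff.1 hn').2 p hpn'
  rw [hcut] at this
  exact this.not_gt hp

lemma inB_eq_of_factorization_eq (hθ : ∀ n : ℕ, 1 ≤ n → (n : ℝ) ≤ θ n) {N n n' : ℕ}
    (hn : InB θ n) (hn' : InB θ n')
    (h : ∀ p ∈ primesLe (θ n), N.factorization p = n.factorization p)
    (h' : ∀ p ∈ primesLe (θ n'), N.factorization p = n'.factorization p) : n = n' := by
  refine Nat.eq_of_factorization_eq hn.1.ne' hn'.1.ne' fun p => ?_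
  induction p using Nat.strong_induction_on with
  | _ p ih =>
    by_cases hp : p.Prime
    · rcases lt_or_ge (θ n) p with hlt | hle
      · exact factorization_eq_of_theta_lt hθ hn hn' ih hlt
      rcases lt_or_ge (θ n') p with hlt' | hle'
      · exact (factorization_eq_of_theta_lt hθ hn' hn (fun q hq => (ih q hq).symm) hlt').symm
      rw [← h p (mem_primesLe.2 ⟨hp, hle⟩), h' p (mem_primesLe.2 ⟨hp, hle'⟩)]
    · simp [Nat.factorization_eq_zero_of_not_prime _ hp]

lemma existsUnique_inB_factorization_eq (hθ : ∀ n : ℕ, 1 ≤ n → (n : ℝ) ≤ θ n) {N : ℕ}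
    (hN : N ≠ 0) :
    ∃! n, InB θ n ∧ ∀ p ∈ primesLe (θ n), N.factorization p = n.factorization p :=
  (exists_inB_factorization_eq hN).elim fun n hn =>
    ⟨n, hn, fun _ hn' => (inB_eq_of_factorization_eq hθ hn.1 hn'.1 hn.2 hn'.2).symm⟩

end BTheta

theorem hasSum_inB_mul_prod_one_sub {F : Type*} [NormedField F] [CompleteSpace F] {θ : ℕ → ℝ}
    (hθ : ∀ n : ℕ, 1 ≤ n → (n : ℝ) ≤ θ n) (f : ℕ →*₀ F) (hf : Summable f)
    (hf0 : ∑' N, f N ≠ 0) :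
    HasSum (fun n : {n | InB θ n} => f n * ∏ p ∈ primesLe (θ n), (1 - f p)) 1 := by
  have hsum := hasSum_mul_tsum_roughNumbers f hf (I := {n | InB θ n})
    (S := fun n => primesLe (θ n)) (fun n hn => ⟨hn.1.ne', primeFactors_subset_primesLe hθ hn⟩)
    fun N hN => existsUnique_inB_factorization_eq hθ hN
  simp_rw [tsum_roughNumbers f hf fun p hp => (mem_primesLe.1 hp).1, mul_left_comm _ (∑' N, f N)]
    at hsum
  exact (hasSum_mul_left_iff hf0).1 (by rwa [mul_one])

open Complex Topology

noncomputable def bThetaTerm (θ : ℕ → ℝ) (n : ℕ) (s : ℂ) : ℂ :=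
  if InB θ n then (n : ℂ) ^ (-s) * ∏ p ∈ primesLe (θ n), (1 - (p : ℂ) ^ (-s)) else 0

theorem hasSum_bThetaTerm {θ : ℕ → ℝ} (hθ : ∀ n : ℕ, 1 ≤ n → (n : ℝ) ≤ θ n) {s : ℂ}
    (hs : 1 < s.re) : HasSum (fun n => bThetaTerm θ n s) 1 := by
  set f := riemannZetaSummandHom (ne_zero_of_one_lt_re hs)
  have hf : Summable f := (summable_riemannZetaSummand hs).of_norm
  have hζ : ∑' N, f N ≠ 0 := by
    rw [tsum_riemannZetaSummand hs]
    exact riemannZeta_ne_zero_of_one_lt_re hs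
  have hterm : (fun n => bThetaTerm θ n s) =
      Set.indicator {n | InB θ n} fun n => f n * ∏ p ∈ primesLe (θ n), (1 - f p) := by
    funext n
    simp only [bThetaTerm, Set.indicator_apply, Set.mem_ofPred_eq]
    rfl
  rw [hterm]
  exact hasSum_subtype_iff_indicator.1 (hasSum_inB_mul_prod_one_sub hθ f hf hζ)

lemma norm_natCast_cpow_neg_le (m : ℕ) {σ : ℝ} (hσ : 0 < σ) {z : ℂ} (hz : σ ≤ z.re) :
    ‖(m : ℂ) ^ (-z)‖ ≤ (m : ℝ) ^ (-σ) := by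
  rw [norm_natCast_cpow_of_re_ne_zero _ (by rw [neg_re]; linarith), neg_re]
  rcases m.eq_zero_or_pos with rfl | hm
  · rw [Nat.cast_zero, Real.zero_rpow (by linarith), Real.zero_rpow (by linarith)]
  · exact Real.rpow_le_rpow_of_exponent_le (by exact_mod_cast hm) (by linarith)

lemma norm_prod_one_sub_cpow_neg_le (S : Finset ℕ) {σ : ℝ} (hσ : 1 < σ) {z : ℂ}
    (hz : σ ≤ z.re) :
    ‖∏ p ∈ S, (1 - (p : ℂ) ^ (-z))‖ ≤ Real.exp (∑' m : ℕ, (m : ℝ) ^ (-σ)) := by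
  calc ‖∏ p ∈ S, (1 - (p : ℂ) ^ (-z))‖
      ≤ ∏ p ∈ S, Real.exp ((p : ℝ) ^ (-σ)) := by
        rw [norm_prod]
        refine prod_le_prod (fun _ _ => norm_nonneg _) fun p _ => (norm_sub_le _ _).trans ?_
        rw [norm_one]
        linarith [norm_natCast_cpow_neg_le p (by linarith) hz, Real.add_one_le_exp ((p : ℝ) ^ (-σ))]
    _ = Real.exp (∑ p ∈ S, (p : ℝ) ^ (-σ)) := (Real.exp_sum _ _).symm
    _ ≤ Real.exp (∑' m : ℕ, (m : ℝ) ^ (-σ)) := Real.exp_le_exp.2 <|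
        (Real.summable_nat_rpow.2 (by linarith)).sum_le_tsum S fun _ _ =>
          Real.rpow_nonneg (Nat.cast_nonneg _) _

lemma norm_bThetaTerm_le (θ : ℕ → ℝ) (n : ℕ) {σ : ℝ} (hσ : 1 < σ) {z : ℂ} (hz : σ ≤ z.re) :
    ‖bThetaTerm θ n z‖ ≤ (n : ℝ) ^ (-σ) * Real.exp (∑' m : ℕ, (m : ℝ) ^ (-σ)) := by
  unfold bThetaTerm
  split_ifs
  · rw [norm_mul]
    exact mul_le_mul (norm_natCast_cpow_neg_le n (by linarith) hz)
      (norm_prod_one_sub_cpow_neg_le _ hσ hz) (norm_nonneg _)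
      (Real.rpow_nonneg (Nat.cast_nonneg _) _)
  · rw [norm_zero]
    positivity

lemma hasDerivAt_natCast_cpow_neg {n : ℕ} (hn : n ≠ 0) (z : ℂ) :
    HasDerivAt (fun w : ℂ => (n : ℂ) ^ (-w)) (-Real.log n * (n : ℂ) ^ (-z)) z := by
  refine ((hasDerivAt_neg z).const_cpow (c := (n : ℂ))
    (Or.inl (Nat.cast_ne_zero.2 hn))).congr_deriv ?_
  rw [natCast_log]
  ring

lemma hasDerivAt_one_sub_natCast_cpow_neg {p : ℕ} (hp : 1 < p) {z : ℂ} (hz : 0 < z.re) :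
    HasDerivAt (fun w : ℂ => 1 - (p : ℂ) ^ (-w))
      (Real.log p / ((p : ℂ) ^ z - 1) * (1 - (p : ℂ) ^ (-z))) z := by
  refine ((hasDerivAt_natCast_cpow_neg (by omega : p ≠ 0) z).const_sub 1).congr_deriv ?_
  have hpz : (p : ℂ) ^ z ≠ 0 := cpow_ne_zero_iff.2 (Or.inl (Nat.cast_ne_zero.2 (by omega)))
  have hpz1 : (p : ℂ) ^ z - 1 ≠ 0 := by
    refine sub_ne_zero.2 fun h => ?_
    have := norm_natCast_cpow_of_pos (by omega : 0 < p) z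
    rw [h, norm_one] at this
    exact (Real.one_lt_rpow (by exact_mod_cast hp) hz).ne this
  rw [cpow_neg]
  field_simp

lemma hasDerivAt_finsetProd_of_hasDerivAt_mul_self {ι 𝕜 : Type*} [NontriviallyNormedField 𝕜]
    {S : Finset ι} {f : ι → 𝕜 → 𝕜} {c : ι → 𝕜} {x : 𝕜}
    (hf : ∀ i ∈ S, HasDerivAt (f i) (c i * f i x) x) :
    HasDerivAt (fun y => ∏ i ∈ S, f i y) ((∑ i ∈ S, c i) * ∏ i ∈ S, f i x) x := by
  refine (HasDerivAt.fun_finsetProd hf).congr_deriv ?_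
  rw [sum_mul]
  refine sum_congr rfl fun i hi => ?_
  rw [smul_eq_mul, mul_left_comm, prod_erase_mul S (f · x) hi]

lemma hasDerivAt_bThetaTerm (θ : ℕ → ℝ) (n : ℕ) {z : ℂ} (hz : 0 < z.re) :
    HasDerivAt (bThetaTerm θ n)
      (if InB θ n then
        (n : ℂ) ^ (-z) *
          ((∑ p ∈ primesLe (θ n), (Real.log p : ℂ) / ((p : ℂ) ^ z - 1)) - (Real.log n : ℂ)) *
          ∏ p ∈ primesLe (θ n), (1 - (p : ℂ) ^ (-z))
      else 0) z := by
  by_cases hn : InB θ n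
  · rw [if_pos hn, show bThetaTerm θ n = _ from funext fun _ => if_pos hn]
    refine ((hasDerivAt_natCast_cpow_neg hn.1.ne' z).mul
      (hasDerivAt_finsetProd_of_hasDerivAt_mul_self fun p hp =>
        hasDerivAt_one_sub_natCast_cpow_neg (mem_primesLe.1 hp).1.one_lt hz)).congr_deriv ?_
    ring
  · rw [if_neg hn, show bThetaTerm θ n = _ from funext fun _ => if_neg hn]
    exact hasDerivAt_const _ _

theorem dirichlet_identity_B_deriv_general (θ : ℕ → ℝ)
    (hθ : ∀ n : ℕ, 1 ≤ n → (n : ℝ) ≤ θ n) (s : ℂ) (hs : 1 < s.re) :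
    (0 : ℂ) = ∑' n : ℕ,
      if InB θ n then
        (n : ℂ) ^ (-s) *
          ((∑ p ∈ primesLe (θ n), (Real.log p : ℂ) / ((p : ℂ) ^ s - 1)) - (Real.log n : ℂ)) *
          ∏ p ∈ primesLe (θ n), (1 - (p : ℂ) ^ (-s))
      else 0 := by
  obtain ⟨σ, hσ, hσs⟩ := exists_between hs
  have hderiv := hasSum_deriv_of_summable_norm (F := bThetaTerm θ) (U := {z | σ < z.re})
    ((Real.summable_nat_rpow.2 (by linarith)).mul_right _)
    (fun n z hz =>
      (hasDerivAt_bThetaTerm θ n (by linarith [hz.out])).differentiableAt.differentiableWithinAt)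
    (isOpen_lt continuous_const continuous_re) (fun n z hz => norm_bThetaTerm_le θ n hσ hz.out.le)
    hσs
  have hone : (fun w => ∑' n, bThetaTerm θ n w) =ᶠ[𝓝 s] fun _ => 1 := by
    filter_upwards [(isOpen_lt continuous_const continuous_re).mem_nhds hs] with w hw
    exact (hasSum_bThetaTerm hθ hw).tsum_eq
  rw [hone.deriv_eq, deriv_const] at hderiv
  refine hderiv.tsum_eq.symm.trans (tsum_congr fun n => ?_)
  exact (hasDerivAt_bThetaTerm θ n (by linarith)).deriv

/-- For `Re(s) > 1`,
`0 = ∑_{n ∈ B_θ} n^{-s} (∑_{p ≤ θ(n)} log p/(p^s - 1) - log n) ∏_{p ≤ θ(n)} (1 - p^{-s})`. -/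
theorem dirichlet_identity_B_deriv (θ : ℕ → ℝ) (hθ1 : 2 ≤ θ 1)
    (hθ : ∀ n : ℕ, 1 ≤ n → (n : ℝ) ≤ θ n) (s : ℂ) (hs : 1 < s.re) :
    (0 : ℂ) = ∑' n : ℕ,
      if InB θ n then
        (n : ℂ) ^ (-s) *
          ((∑ p ∈ primesLe (θ n), (Real.log p : ℂ) / ((p : ℂ) ^ s - 1)) - (Real.log n : ℂ)) *
          ∏ p ∈ primesLe (θ n), (1 - (p : ℂ) ^ (-s))
      else 0 :=
  dirichlet_identity_B_deriv_general θ hθ s hs
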